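/- arXiv:1707.07461 — 5 statements merged into one kernel-verified Lean document; each statement's English description precedes it below -/
import Mathlib

section
/- Let λ > 0 and set g(λ) = (1 − e^{−λ})/λ. For every probability measure ρ on ℝ that is a finite convex combination of Dirac measures and satisfies 0 < ∫ x dρ < ∞, there exists a sequence (ρ_n) of probability measures on ℝ, each a finite convex combination of Dirac measures with 0 < ∫ x dρ_n < ∞, such that ρ_n → ρ vaguely (i.e. ∫ φ dρ_n → ∫ φ dρ for every continuous compactly supported φ : ℝ → ℝ) while A(ρ_n) does not converge vaguely to A(ρ); in fact one may take ρ_n = (n/(n+1))·ρ + (1/(n+1))·δ_{n²}, for which A(ρ_n) converges vaguely to (1 − g(λ))·ρ ≠ A(ρ). Hence A is discontinuous at every point of the set of finite point-mass probability measures with nonzero mean. -/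
open MeasureTheory Filter

/-- The retardation factor `g(λ) = (1 - e^{-λ})/λ` (with the convention `g(0) = 1`). -/
noncomputable def gFactor (l : ℝ) : ℝ := if l = 0 then 1 else (1 - Real.exp (-l)) / l

/-- The selection update operator: `A(ρ)` is the measure with density
`x ↦ 1 - g(λ) + g(λ)·x/x̄` with respect to `ρ`, where `x̄ = ∫ x dρ`. -/
noncomputable def updateA (l : ℝ) (ρ : Measure ℝ) : Measure ℝ :=
  ρ.withDensity (fun x =>
    ENNReal.ofReal (1 - gFactor l + gFactor l * x / ∫ y, y ∂ρ))

/-- A finite convex combination of Dirac measures. -/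
def IsFinitePointMass (ρ : Measure ℝ) : Prop :=
  ∃ (m : ℕ) (a : Fin m → ℝ) (x : Fin m → ℝ),
    (∀ k, 0 ≤ a k) ∧ (∑ k, a k = 1) ∧
    ρ = ∑ k, ENNReal.ofReal (a k) • Measure.dirac (x k)

/-- Vague convergence: convergence of the integrals against every continuous
compactly supported test function. -/
def VagueTendsto (ρs : ℕ → Measure ℝ) (ρ : Measure ℝ) : Prop :=
  ∀ φ : ℝ → ℝ, Continuous φ → HasCompactSupport φ →
    Tendsto (fun n => ∫ x, φ x ∂(ρs n)) atTop (nhds (∫ x, φ x ∂ρ))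


/-!
The atom of mass `1/(n+1)` placed at `n²` escapes every compact set, so `ρ_n → ρ` vaguely; but it
drives the mean `x̄_n` to infinity. Hence the update density `1 - g + g·x/x̄_n` tends to `1 - g` on
the atoms of `ρ`, while the escaping atom, whose density `≈ g·n` compensates its weight, carries
the mass `g` off to infinity. So `A(ρ_n) → (1 - g)·ρ` vaguely, a measure of mass `1 - g < 1`,
whereas `A(ρ)` has mass at least `∫ (1 - g + g·x/x̄) dρ = 1`. Vague limits of locally finite
measures on `ℝ` are unique (Riesz–Markov–Kakutani), so `A(ρ_n)` does not converge to `A(ρ)`.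
-/

open scoped Topology

lemma gFactor_pos {l : ℝ} (hl : 0 < l) : 0 < gFactor l := by
  rw [gFactor, if_neg hl.ne']
  exact div_pos (by simpa using Real.exp_lt_one_iff.2 (neg_lt_zero.2 hl)) hl

lemma gFactor_lt_one {l : ℝ} (hl : 0 < l) : gFactor l < 1 := by
  rw [gFactor, if_neg hl.ne', div_lt_one hl]
  linarith [Real.add_one_lt_exp (x := -l) (by linarith)]

lemma HasCompactSupport.eventually_comp_eq_zero {α β ι : Type*} [TopologicalSpace α] [Zero β]
    {φ : α → β} (hφ : HasCompactSupport φ) {L : Filter ι} {u : ι → α}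
    (hu : Tendsto u L (cocompact α)) : ∀ᶠ i in L, φ (u i) = 0 :=
  (hu.eventually_mem hφ.isCompact.compl_mem_cocompact).mono fun _ hi =>
    image_eq_zero_of_notMem_tsupport hi

lemma VagueTendsto.unique {ρs : ℕ → Measure ℝ} {μ ν : Measure ℝ}
    [IsLocallyFiniteMeasure μ] [IsLocallyFiniteMeasure ν]
    (hμ : VagueTendsto ρs μ) (hν : VagueTendsto ρs ν) : μ = ν :=
  Measure.ext_of_integral_eq_on_compactlySupported fun φ =>
    tendsto_nhds_unique (hμ φ φ.continuous φ.hasCompactSupport)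
      (hν φ φ.continuous φ.hasCompactSupport)

section FinitePointMass

lemma integral_sum_smul_dirac {m : ℕ} {a : Fin m → ℝ} (ha : ∀ k, 0 ≤ a k) (x : Fin m → ℝ)
    (φ : ℝ → ℝ) :
    ∫ y, φ y ∂(∑ k, ENNReal.ofReal (a k) • Measure.dirac (x k)) = ∑ k, a k * φ (x k) := by
  rw [integral_finsetSum_measure fun k _ =>
    (integrable_dirac enorm_lt_top).smul_measure ENNReal.ofReal_ne_top]
  refine Finset.sum_congr rfl fun k _ => ?_
  rw [integral_smul_measure, integral_dirac, ENNReal.toReal_ofReal (ha k), smul_eq_mul]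

variable {ρ : Measure ℝ}

lemma IsFinitePointMass.isProbabilityMeasure (hρ : IsFinitePointMass ρ) :
    IsProbabilityMeasure ρ := by
  obtain ⟨m, a, x, ha, hsum, rfl⟩ := hρ
  constructor
  simp [← ENNReal.ofReal_sum_of_nonneg fun k _ => ha k, hsum]

lemma IsFinitePointMass.integrable (hρ : IsFinitePointMass ρ) (φ : ℝ → ℝ) : Integrable φ ρ := by
  obtain ⟨m, a, x, -, -, rfl⟩ := hρ
  exact integrable_finsetSum_measure.2 fun k _ =>
    (integrable_dirac enorm_lt_top).smul_measure ENNReal.ofReal_ne_top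

lemma IsFinitePointMass.tendsto_integral (hρ : IsFinitePointMass ρ) {ι : Type*} {L : Filter ι}
    {F : ι → ℝ → ℝ} {G : ℝ → ℝ} (hF : ∀ x, Tendsto (fun i => F i x) L (𝓝 (G x))) :
    Tendsto (fun i => ∫ x, F i x ∂ρ) L (𝓝 (∫ x, G x ∂ρ)) := by
  obtain ⟨m, a, x, ha, -, rfl⟩ := hρ
  simp only [integral_sum_smul_dirac ha]
  exact tendsto_finsetSum _ fun k _ => (hF (x k)).const_mul (a k)

lemma IsFinitePointMass.smul_add_smul_dirac (hρ : IsFinitePointMass ρ) {s t : ℝ} (hs : 0 ≤ s)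
    (ht : 0 ≤ t) (hst : s + t = 1) (y : ℝ) :
    IsFinitePointMass (ENNReal.ofReal s • ρ + ENNReal.ofReal t • Measure.dirac y) := by
  obtain ⟨m, a, x, ha, hsum, rfl⟩ := hρ
  refine ⟨m + 1, Fin.cons t fun k => s * a k, Fin.cons y x, ?_, ?_, ?_⟩
  · exact Fin.cases ht fun k => mul_nonneg hs (ha k)
  · rw [Fin.sum_cons, ← Finset.mul_sum, hsum]
    linarith
  · rw [Fin.sum_univ_succ, add_comm, Finset.smul_sum]
    simp only [Fin.cons_zero, Fin.cons_succ, smul_smul, ENNReal.ofReal_mul hs]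

end FinitePointMass

lemma integral_smul_add_smul_dirac {μ : Measure ℝ} [IsFiniteMeasure μ] {φ : ℝ → ℝ}
    (hφ : Integrable φ μ) {s t : ℝ} (hs : 0 ≤ s) (ht : 0 ≤ t) (y : ℝ) :
    ∫ x, φ x ∂(ENNReal.ofReal s • μ + ENNReal.ofReal t • Measure.dirac y)
      = s * ∫ x, φ x ∂μ + t * φ y := by
  rw [integral_add_measure (hφ.smul_measure ENNReal.ofReal_ne_top)
      ((integrable_dirac enorm_lt_top).smul_measure ENNReal.ofReal_ne_top),
    integral_smul_measure, integral_smul_measure, integral_dirac,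
    ENNReal.toReal_ofReal hs, ENNReal.toReal_ofReal ht, smul_eq_mul, smul_eq_mul]

section Update

variable {l : ℝ}

noncomputable def selectionDensity (l : ℝ) (ρ : Measure ℝ) (x : ℝ) : ℝ :=
  1 - gFactor l + gFactor l * x / ∫ y, y ∂ρ

lemma integral_updateA (l : ℝ) (ρ : Measure ℝ) (φ : ℝ → ℝ) :
    ∫ x, φ x ∂(updateA l ρ) = ∫ x, max (selectionDensity l ρ x) 0 * φ x ∂ρ := by
  rw [updateA, integral_withDensity_eq_integral_toReal_smul (by fun_prop)
    (ae_of_all _ fun _ => ENNReal.ofReal_lt_top)]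
  simp only [ENNReal.toReal_ofReal', smul_eq_mul, selectionDensity]

lemma integrable_selectionDensity {ρ : Measure ℝ} [IsFiniteMeasure ρ]
    (hint : Integrable (fun x => x) ρ) : Integrable (selectionDensity l ρ) ρ :=
  (integrable_const _).add ((hint.const_mul (gFactor l)).div_const _)

lemma integral_selectionDensity {ρ : Measure ℝ} [IsProbabilityMeasure ρ]
    (hint : Integrable (fun x => x) ρ) (hmean : ∫ x, x ∂ρ ≠ 0) :
    ∫ x, selectionDensity l ρ x ∂ρ = 1 := by
  unfold selectionDensity
  rw [integral_add (integrable_const _) ((hint.const_mul _).div_const _), integral_const,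
    integral_div, integral_const_mul, probReal_univ, one_smul, mul_div_assoc, div_self hmean]
  ring

lemma isFiniteMeasure_updateA {ρ : Measure ℝ} [IsFiniteMeasure ρ]
    (hint : Integrable (fun x => x) ρ) : IsFiniteMeasure (updateA l ρ) :=
  isFiniteMeasure_withDensity_ofReal (integrable_selectionDensity hint).hasFiniteIntegral

lemma smul_ne_updateA (hg : 0 < gFactor l) {ρ : Measure ℝ} [IsProbabilityMeasure ρ]
    (hint : Integrable (fun x => x) ρ) (hmean : ∫ x, x ∂ρ ≠ 0) :
    ENNReal.ofReal (1 - gFactor l) • ρ ≠ updateA l ρ := by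
  intro h
  have hsmul : ∫ _, (1 : ℝ) ∂(ENNReal.ofReal (1 - gFactor l) • ρ) = max (1 - gFactor l) 0 := by
    simp [ENNReal.toReal_ofReal']
  have hupdate : ∫ _, (1 : ℝ) ∂(updateA l ρ) = ∫ x, max (selectionDensity l ρ x) 0 ∂ρ := by
    simp only [integral_updateA, mul_one]
  have hle : 1 ≤ ∫ x, max (selectionDensity l ρ x) 0 ∂ρ := by
    rw [← integral_selectionDensity hint hmean]
    exact integral_mono (integrable_selectionDensity hint)
      (integrable_selectionDensity hint).pos_part fun x => le_max_left _ _
  rw [← hupdate, ← h, hsmul] at hle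
  exact absurd hle (not_le.2 (max_lt (by linarith) one_pos))

lemma tendsto_selectionDensity {ι : Type*} {L : Filter ι} {ρs : ι → Measure ℝ}
    (hmean : Tendsto (fun i => ∫ y, y ∂(ρs i)) L atTop) (x : ℝ) :
    Tendsto (fun i => selectionDensity l (ρs i) x) L (𝓝 (1 - gFactor l)) := by
  simpa [selectionDensity, div_eq_mul_inv] using
    tendsto_const_nhds.add (hmean.inv_tendsto_atTop.const_mul (gFactor l * x))

end Update

section MassEscape

/-- At `n = 0` the formula would give `δ₀`, whose mean vanishes, so the sequence starts at `ρ`. -/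
noncomputable def massEscapeSeq (ρ : Measure ℝ) (n : ℕ) : Measure ℝ :=
  if n = 0 then ρ else
    ENNReal.ofReal ((n : ℝ) / ((n : ℝ) + 1)) • ρ
      + ENNReal.ofReal (1 / ((n : ℝ) + 1)) • Measure.dirac ((n : ℝ) ^ 2)

variable {ρ : Measure ℝ}

lemma massEscapeSeq_of_ne_zero {n : ℕ} (hn : n ≠ 0) :
    massEscapeSeq ρ n = ENNReal.ofReal ((n : ℝ) / ((n : ℝ) + 1)) • ρ
      + ENNReal.ofReal (1 / ((n : ℝ) + 1)) • Measure.dirac ((n : ℝ) ^ 2) :=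
  if_neg hn

lemma isFinitePointMass_massEscapeSeq (hρ : IsFinitePointMass ρ) (n : ℕ) :
    IsFinitePointMass (massEscapeSeq ρ n) := by
  rcases eq_or_ne n 0 with rfl | hn
  · exact hρ
  rw [massEscapeSeq_of_ne_zero hn]
  exact hρ.smul_add_smul_dirac (by positivity) (by positivity) (by field_simp) _

lemma integral_massEscapeSeq [IsFiniteMeasure ρ] {φ : ℝ → ℝ} (hφ : Integrable φ ρ) {n : ℕ}
    (hn : n ≠ 0) :
    ∫ x, φ x ∂(massEscapeSeq ρ n)
      = (n : ℝ) / ((n : ℝ) + 1) * ∫ x, φ x ∂ρ + 1 / ((n : ℝ) + 1) * φ ((n : ℝ) ^ 2) := by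
  rw [massEscapeSeq_of_ne_zero hn]
  exact integral_smul_add_smul_dirac hφ (by positivity) (by positivity) _

lemma integral_id_massEscapeSeq_pos [IsFiniteMeasure ρ] (hint : Integrable (fun x => x) ρ)
    (hmean : 0 < ∫ x, x ∂ρ) (n : ℕ) : 0 < ∫ x, x ∂(massEscapeSeq ρ n) := by
  rcases eq_or_ne n 0 with rfl | hn
  · exact hmean
  rw [integral_massEscapeSeq hint hn]
  have hn_pos : 0 < (n : ℝ) := by positivity
  positivity

lemma tendsto_integral_id_massEscapeSeq [IsFiniteMeasure ρ] (hint : Integrable (fun x => x) ρ) :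
    Tendsto (fun n => ∫ x, x ∂(massEscapeSeq ρ n)) atTop atTop := by
  have hweight := tendsto_natCast_div_add_atTop (1 : ℝ)
  have hescape : Tendsto (fun n : ℕ => 1 / ((n : ℝ) + 1) * (n : ℝ) ^ 2) atTop atTop := by
    refine tendsto_atTop_mono (fun n => ?_)
      (tendsto_atTop_add_const_right atTop (-1 : ℝ) tendsto_natCast_atTop_atTop)
    rw [one_div_mul_eq_div, le_div_iff₀ (by positivity)]
    nlinarith
  refine ((hweight.mul_const (∫ x, x ∂ρ)).add_atTop hescape).congr' ?_
  filter_upwards [eventually_ne_atTop 0] with n hn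
  rw [integral_massEscapeSeq hint hn]

lemma tendsto_natCast_sq_cocompact : Tendsto (fun n : ℕ => (n : ℝ) ^ 2) atTop (cocompact ℝ) :=
  ((tendsto_pow_atTop two_ne_zero).comp tendsto_natCast_atTop_atTop).mono_right atTop_le_cocompact

lemma vagueTendsto_massEscapeSeq (hρ : IsFinitePointMass ρ) :
    VagueTendsto (massEscapeSeq ρ) ρ := by
  have := hρ.isProbabilityMeasure
  intro φ _ hφ
  have hlim := (tendsto_natCast_div_add_atTop (1 : ℝ)).mul_const (∫ x, φ x ∂ρ)
  rw [one_mul] at hlim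
  refine hlim.congr' ?_
  filter_upwards [eventually_ne_atTop 0, hφ.eventually_comp_eq_zero tendsto_natCast_sq_cocompact]
    with n hn (hφn : φ ((n : ℝ) ^ 2) = 0)
  rw [integral_massEscapeSeq (hρ.integrable φ) hn, hφn, mul_zero, add_zero]

lemma vagueTendsto_updateA_massEscapeSeq {l : ℝ} (hg : gFactor l ≤ 1) (hρ : IsFinitePointMass ρ) :
    VagueTendsto (fun n => updateA l (massEscapeSeq ρ n)) (ENNReal.ofReal (1 - gFactor l) • ρ) := by
  have := hρ.isProbabilityMeasure
  intro φ _ hφ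
  have hdensity : Tendsto (fun n => ∫ x, max (selectionDensity l (massEscapeSeq ρ n) x) 0 * φ x ∂ρ)
      atTop (𝓝 (∫ x, (1 - gFactor l) * φ x ∂ρ)) := by
    refine hρ.tendsto_integral fun x => ?_
    have := ((tendsto_selectionDensity (l := l)
      (tendsto_integral_id_massEscapeSeq (hρ.integrable _)) x).max
        (tendsto_const_nhds (x := 0))).mul_const (φ x)
    rwa [max_eq_left (sub_nonneg.2 hg)] at this
  have hlim := (tendsto_natCast_div_add_atTop (1 : ℝ)).mul hdensity
  rw [one_mul, integral_const_mul, ← ENNReal.toReal_ofReal (sub_nonneg.2 hg), ← smul_eq_mul,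
    ← integral_smul_measure] at hlim
  refine hlim.congr' ?_
  filter_upwards [eventually_ne_atTop 0, hφ.eventually_comp_eq_zero tendsto_natCast_sq_cocompact]
    with n hn (hφn : φ ((n : ℝ) ^ 2) = 0)
  rw [integral_updateA, integral_massEscapeSeq (hρ.integrable _) hn, hφn, mul_zero, mul_zero,
    add_zero]

end MassEscape

theorem discontinuity_of_update_operator_general
    (l : ℝ) (hl : 0 < l)
    (ρ : Measure ℝ)
    (hpm : IsFinitePointMass ρ)
    (hmean : 0 < ∫ x, x ∂ρ) :
    ∃ ρs : ℕ → Measure ℝ,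
      (∀ n, IsProbabilityMeasure (ρs n)) ∧
      (∀ n, IsFinitePointMass (ρs n)) ∧
      (∀ n, 0 < ∫ x, x ∂(ρs n)) ∧
      (∀ n : ℕ, 1 ≤ n →
        ρs n = ENNReal.ofReal ((n : ℝ) / ((n : ℝ) + 1)) • ρ
          + ENNReal.ofReal (1 / ((n : ℝ) + 1)) • Measure.dirac ((n : ℝ) ^ 2)) ∧
      VagueTendsto ρs ρ ∧
      VagueTendsto (fun n => updateA l (ρs n))
        (ENNReal.ofReal (1 - gFactor l) • ρ) ∧
      ENNReal.ofReal (1 - gFactor l) • ρ ≠ updateA l ρ ∧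
      ¬ VagueTendsto (fun n => updateA l (ρs n)) (updateA l ρ) := by
  have := hpm.isProbabilityMeasure
  have := Measure.smul_finite ρ (ENNReal.ofReal_ne_top (r := 1 - gFactor l))
  have := isFiniteMeasure_updateA (l := l) (hpm.integrable fun x => x)
  have hne := smul_ne_updateA (gFactor_pos hl) (hpm.integrable fun x => x) hmean.ne'
  have hlim := vagueTendsto_updateA_massEscapeSeq (gFactor_lt_one hl).le hpm
  exact ⟨massEscapeSeq ρ, fun n => (isFinitePointMass_massEscapeSeq hpm n).isProbabilityMeasure,
    isFinitePointMass_massEscapeSeq hpm,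
    integral_id_massEscapeSeq_pos (hpm.integrable fun x => x) hmean,
    fun _ hn => massEscapeSeq_of_ne_zero (Nat.one_le_iff_ne_zero.1 hn),
    vagueTendsto_massEscapeSeq hpm, hlim, hne, fun h => hne (hlim.unique h)⟩

theorem discontinuity_of_update_operator
    (l : ℝ) (hl : 0 < l)
    (ρ : Measure ℝ) (hρ : IsProbabilityMeasure ρ)
    (hpm : IsFinitePointMass ρ)
    (hmean : 0 < ∫ x, x ∂ρ) :
    ∃ ρs : ℕ → Measure ℝ,
      (∀ n, IsProbabilityMeasure (ρs n)) ∧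
      (∀ n, IsFinitePointMass (ρs n)) ∧
      (∀ n, 0 < ∫ x, x ∂(ρs n)) ∧
      (∀ n : ℕ, 1 ≤ n →
        ρs n = ENNReal.ofReal ((n : ℝ) / ((n : ℝ) + 1)) • ρ
          + ENNReal.ofReal (1 / ((n : ℝ) + 1)) • Measure.dirac ((n : ℝ) ^ 2)) ∧
      VagueTendsto ρs ρ ∧
      VagueTendsto (fun n => updateA l (ρs n))
        (ENNReal.ofReal (1 - gFactor l) • ρ) ∧
      ENNReal.ofReal (1 - gFactor l) • ρ ≠ updateA l ρ ∧
      ¬ VagueTendsto (fun n => updateA l (ρs n)) (updateA l ρ) :=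
  discontinuity_of_update_operator_general l hl ρ hpm hmean
end

section
/- Fix L > 0 and λ ≥ 0. Let ρ and ρ_n (n ∈ ℕ) be probability measures on ℝ supported in the interval [0, L], none of them equal to the Dirac measure δ_0 (equivalently, all with ∫ x dρ > 0). If ρ_n → ρ weakly (i.e. ∫ φ dρ_n → ∫ φ dρ for every bounded continuous φ : ℝ → ℝ), then A(ρ_n) → A(ρ) weakly. In other words, the update operator A is continuous on the set of probability measures supported in [0, L] other than δ_0, with the weak topology. -/
open MeasureTheory Filter

/-- Weak convergence: convergence of the integrals against every bounded
continuous test function. -/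
def WeakTendsto (ρs : ℕ → Measure ℝ) (ρ : Measure ℝ) : Prop :=
  ∀ φ : ℝ → ℝ, Continuous φ → (∃ C : ℝ, ∀ x, |φ x| ≤ C) →
    Tendsto (fun n => ∫ x, φ x ∂(ρs n)) atTop (nhds (∫ x, φ x ∂ρ))

lemma bdd_integrable {μ : Measure ℝ} [IsFiniteMeasure μ] {f : ℝ → ℝ}
    (hf : Continuous f) (K : ℝ) (hK : ∀ x, |f x| ≤ K) : Integrable f μ :=
  (integrable_const K).mono' hf.aestronglyMeasurable
    (Filter.Eventually.of_forall fun x => by simpa using hK x)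

lemma updateA_integral (l : ℝ) (μ : Measure ℝ) (φ : ℝ → ℝ) :
    ∫ x, φ x ∂(updateA l μ) =
      ∫ x, max (1 - gFactor l + gFactor l * x / ∫ y, y ∂μ) 0 * φ x ∂μ := by
  set m := ∫ y, y ∂μ with hm
  have hmeas : Measurable fun x : ℝ => Real.toNNReal (1 - gFactor l + gFactor l * x / m) :=
    ((continuous_const.add
      ((continuous_const.mul continuous_id).div_const m)).measurable).real_toNNReal
  have h : updateA l μ = μ.withDensity
      (fun x => ((Real.toNNReal (1 - gFactor l + gFactor l * x / m) : NNReal) : ENNReal)) := rfl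
  rw [h, integral_withDensity_eq_integral_smul hmeas]
  refine integral_congr_ae (Filter.Eventually.of_forall fun x => ?_)
  simp [NNReal.smul_def, Real.coe_toNNReal']

theorem update_operator_continuous
    (L l : ℝ) (hL : 0 < L) (hl : 0 ≤ l)
    (ρ : Measure ℝ) (ρs : ℕ → Measure ℝ)
    (hρ : IsProbabilityMeasure ρ) (hρs : ∀ n, IsProbabilityMeasure (ρs n))
    (hsupp : ρ (Set.Icc 0 L)ᶜ = 0) (hsupps : ∀ n, (ρs n) (Set.Icc 0 L)ᶜ = 0)
    (hmean : 0 < ∫ x, x ∂ρ) (hmeans : ∀ n, 0 < ∫ x, x ∂(ρs n))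
    (hconv : WeakTendsto ρs ρ) :
    WeakTendsto (fun n => updateA l (ρs n)) (updateA l ρ) := by
  intro φ hφc hφb
  obtain ⟨C, hC⟩ := hφb
  have hC0 : 0 ≤ C := le_trans (abs_nonneg _) (hC 0)
  set g := gFactor l with hg
  set T : ℝ → ℝ := fun x => min (max x 0) L with hT
  have hTcont : Continuous T := (continuous_id.max continuous_const).min continuous_const
  have hTnn : ∀ x, 0 ≤ T x := fun x => le_min (le_max_right x 0) hL.le
  have hTle : ∀ x, T x ≤ L := fun x => min_le_right _ _
  have hTbd : ∀ x, |T x| ≤ L := fun x => abs_le.mpr ⟨by linarith [hTnn x], hTle x⟩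
  have haeT : ∀ (μ : Measure ℝ), μ (Set.Icc 0 L)ᶜ = 0 → ∀ᵐ x ∂μ, T x = x := by
    intro μ hμ
    have h1 : ∀ᵐ x ∂μ, x ∈ Set.Icc 0 L := by
      rw [ae_iff]
      exact hμ
    filter_upwards [h1] with x hx
    simp only [hT]
    rw [max_eq_left hx.1, min_eq_left hx.2]
  set M := ∫ x, x ∂ρ with hM
  set ms : ℕ → ℝ := fun n => ∫ x, x ∂(ρs n) with hms
  -- convergence of means
  have hmc : Tendsto ms atTop (nhds M) := by
    have h := hconv T hTcont ⟨L, hTbd⟩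
    have e1 : (fun n => ∫ x, T x ∂(ρs n)) = ms :=
      funext fun n => integral_congr_ae (haeT _ (hsupps n))
    have e2 : ∫ x, T x ∂ρ = M := integral_congr_ae (haeT _ hsupp)
    rwa [e1, e2] at h
  have hinv : Tendsto (fun n => (ms n)⁻¹) atTop (nhds M⁻¹) := hmc.inv₀ (ne_of_gt hmean)
  -- the truncated integrand
  set ψ : ℝ → ℝ → ℝ := fun m x => max (1 - g + g * T x / m) 0 * φ x with hψ
  have hψcont : ∀ m, Continuous (ψ m) := fun m =>
    ((continuous_const.add
      ((continuous_const.mul hTcont).div_const m)).max continuous_const).mul hφc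
  have hψbd : ∀ m x, |ψ m x| ≤ (|1 - g| + |g| * L / |m|) * C := by
    intro m x
    have h1 : |max (1 - g + g * T x / m) 0| ≤ |1 - g| + |g| * L / |m| := by
      rw [abs_of_nonneg (le_max_right _ 0)]
      have h2 : max (1 - g + g * T x / m) 0 ≤ |1 - g + g * T x / m| :=
        max_le (le_abs_self _) (abs_nonneg _)
      have h3 : |g * T x / m| ≤ |g| * L / |m| := by
        rw [abs_div, abs_mul, div_eq_mul_inv, div_eq_mul_inv]
        exact mul_le_mul_of_nonneg_right
          (mul_le_mul_of_nonneg_left (hTbd x) (abs_nonneg g))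
          (inv_nonneg.mpr (abs_nonneg m))
      calc max (1 - g + g * T x / m) 0 ≤ |1 - g + g * T x / m| := h2
        _ ≤ |1 - g| + |g * T x / m| := abs_add_le _ _
        _ ≤ |1 - g| + |g| * L / |m| := by linarith
    calc |ψ m x| = |max (1 - g + g * T x / m) 0| * |φ x| := abs_mul _ _
      _ ≤ (|1 - g| + |g| * L / |m|) * C := by
          apply mul_le_mul h1 (hC x) (abs_nonneg _)
          positivity
  -- the key rewriting of the updated integrals
  have key : ∀ (μ : Measure ℝ), μ (Set.Icc 0 L)ᶜ = 0 →
      ∫ x, φ x ∂(updateA l μ) = ∫ x, ψ (∫ y, y ∂μ) x ∂μ := by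
    intro μ hμ
    rw [updateA_integral]
    refine integral_congr_ae ?_
    filter_upwards [haeT μ hμ] with x hx
    simp only [hψ]
    rw [hx]
  have e : (fun n => ∫ x, φ x ∂(updateA l (ρs n))) = fun n => ∫ x, ψ (ms n) x ∂(ρs n) :=
    funext fun n => key _ (hsupps n)
  rw [show (∫ x, φ x ∂(updateA l ρ)) = ∫ x, ψ M x ∂ρ from key ρ hsupp]
  rw [e]
  -- the fixed-mean term converges by weak convergence
  have hB : Tendsto (fun n => ∫ x, ψ M x ∂(ρs n)) atTop (nhds (∫ x, ψ M x ∂ρ)) :=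
    hconv (ψ M) (hψcont M) ⟨_, hψbd M⟩
  -- pointwise bound on the difference of integrands
  have hdiffbd : ∀ m m' x, |ψ m x - ψ m' x| ≤ |g| * L * |m⁻¹ - m'⁻¹| * C := by
    intro m m' x
    have h1 : ψ m x - ψ m' x =
        (max (1 - g + g * T x / m) 0 - max (1 - g + g * T x / m') 0) * φ x := by
      simp only [hψ]; ring
    rw [h1, abs_mul]
    have h2 : |max (1 - g + g * T x / m) 0 - max (1 - g + g * T x / m') 0| ≤
        |g * T x * (m⁻¹ - m'⁻¹)| := by
      refine (abs_max_sub_max_le_abs _ _ 0).trans_eq ?_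
      congr 1
      rw [div_eq_mul_inv, div_eq_mul_inv]; ring
    have h3 : |g * T x * (m⁻¹ - m'⁻¹)| ≤ |g| * L * |m⁻¹ - m'⁻¹| := by
      rw [abs_mul, abs_mul]
      exact mul_le_mul_of_nonneg_right
        (mul_le_mul_of_nonneg_left (hTbd x) (abs_nonneg g)) (abs_nonneg _)
    exact mul_le_mul (h2.trans h3) (hC x) (abs_nonneg _) (by positivity)
  -- the varying-mean correction tends to zero
  have hA : Tendsto (fun n => ∫ x, ψ (ms n) x ∂(ρs n) - ∫ x, ψ M x ∂(ρs n)) atTop (nhds 0) := by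
    apply squeeze_zero_norm (a := fun n => |g| * L * |(ms n)⁻¹ - M⁻¹| * C)
    · intro n
      haveI := hρs n
      rw [← integral_sub
        (bdd_integrable (hψcont (ms n)) _ (hψbd (ms n)))
        (bdd_integrable (hψcont M) _ (hψbd M))]
      refine (norm_integral_le_of_norm_le_const
        (C := |g| * L * |(ms n)⁻¹ - M⁻¹| * C)
        (Filter.Eventually.of_forall fun x => ?_)).trans_eq (by simp)
      simpa [Real.norm_eq_abs] using hdiffbd (ms n) M x
    · have h := (((hinv.sub (tendsto_const_nhds (x := M⁻¹))).abs).const_mul (|g| * L)).mul_const C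
      simpa using h
  have hsum : (fun n => ∫ x, ψ (ms n) x ∂(ρs n)) =
      fun n => (∫ x, ψ (ms n) x ∂(ρs n) - ∫ x, ψ M x ∂(ρs n)) + ∫ x, ψ M x ∂(ρs n) :=
    funext fun n => by ring
  rw [hsum]
  simpa using hA.add hB
end

section
/- Let f : ℝ → ℝ satisfy |f(x)| ≤ a·cosh(b·x) for all x with a > 0, b ∈ ℝ, let ρ be a compactly supported probability measure on ℝ with moment generating function ψ(t) = ∫ e^{t·x} dρ(x), and set ψ̃(b) = max(ψ(b), ψ(−b)). Then for every λ > 0 and every x ∈ ℝ, Σ_{n=0}^∞ (e^{−λ} λ^n / (n+1)!) · |∫ f d(δ_x ∗ ρ^{∗n})| ≤ a · e^{|b·x| − λ} · (e^{λ·ψ̃(b)} − 1) / (λ·ψ̃(b)), and Σ_{n=0}^∞ (e^{−λ} λ^n / (n+1)!) · |∫ f d(ρ^{∗(n+1)})| ≤ a · (e^{λ·ψ̃(b)} − 1) / (λ·e^{λ}). -/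
open MeasureTheory Filter

/-- The `n`-fold convolution power of a measure on `ℝ`, with `ρ^{∗0} = δ₀`. -/
noncomputable def convPow (ρ : Measure ℝ) : ℕ → Measure ℝ
  | 0 => Measure.dirac 0
  | n + 1 => (convPow ρ n).conv ρ

/-- The moment generating function `ψ(t) = ∫ e^{t·x} dρ(x)`. -/
noncomputable def mgf' (ρ : Measure ℝ) (t : ℝ) : ℝ := ∫ x, Real.exp (t * x) ∂ρ

/-!
Since `|f| ≤ a cosh (b ·)`, the integral of `f` against any measure `μ` is bounded by `a / 2`
times the sum of the exponential moments of `μ` at `±b`. Exponential moments are multiplicative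
under convolution, and those of `ρ` are the finite numbers `ψ(±b)` by compactness of the support,
so those of `δ_x ∗ ρ^{∗n}` are at most `e^{|b x|} ψ̃(b)^n`. Against the weights
`e^{-λ} λ^n / (n+1)!` this sums to `e^{|b x| - λ} (e^{λ ψ̃(b)} - 1) / (λ ψ̃(b))`.
-/

open scoped ENNReal
open Real

/-- Exponential moments as lower integrals: unlike `mgf'`, these are multiplicative under
convolution of arbitrary s-finite measures, with no integrability side conditions. -/
noncomputable def emgf (μ : Measure ℝ) (t : ℝ) : ℝ≥0∞ :=
  ∫⁻ y, ENNReal.ofReal (exp (t * y)) ∂μ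

lemma emgf_dirac (x t : ℝ) : emgf (Measure.dirac x) t = ENNReal.ofReal (exp (t * x)) :=
  lintegral_dirac x _

lemma emgf_conv (μ ν : Measure ℝ) [SFinite ν] (t : ℝ) :
    emgf (μ ∗ ν) t = emgf μ t * emgf ν t := by
  rw [emgf, Measure.lintegral_conv (by fun_prop), emgf, emgf,
    ← lintegral_mul_const _ (by fun_prop)]
  refine lintegral_congr fun x => ?_
  rw [← lintegral_const_mul _ (by fun_prop)]
  refine lintegral_congr fun y => ?_
  rw [← ENNReal.ofReal_mul (exp_nonneg _), ← exp_add, mul_add]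

lemma emgf_convPow (ρ : Measure ℝ) [SFinite ρ] (t : ℝ) (n : ℕ) :
    emgf (convPow ρ n) t = emgf ρ t ^ n := by
  induction n with
  | zero => simp [convPow, emgf_dirac]
  | succ n ih => rw [convPow, emgf_conv, ih, pow_succ]

lemma integrable_exp_mul_of_ae_mem_compact {ρ : Measure ℝ} [IsFiniteMeasureOnCompacts ρ]
    {K : Set ℝ} (hK : IsCompact K) (hsupp : ρ Kᶜ = 0) (t : ℝ) :
    Integrable (fun y => exp (t * y)) ρ := by
  rw [← Measure.restrict_eq_self_of_ae_mem (mem_ae_iff.mpr hsupp)]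
  exact (by fun_prop : Continuous fun y => exp (t * y)).continuousOn.integrableOn_compact hK

lemma emgf_eq_ofReal_mgf' {ρ : Measure ℝ} {t : ℝ} (h : Integrable (fun y => exp (t * y)) ρ) :
    emgf ρ t = ENNReal.ofReal (mgf' ρ t) :=
  (ofReal_integral_eq_lintegral_ofReal h (ae_of_all _ fun _ => exp_nonneg _)).symm

lemma ofReal_abs_integral_le_emgf {f : ℝ → ℝ} {a b : ℝ} (ha : 0 ≤ a)
    (hbound : ∀ y, |f y| ≤ a * cosh (b * y)) (μ : Measure ℝ) :
    ENNReal.ofReal |∫ y, f y ∂μ| ≤ ENNReal.ofReal (a / 2) * (emgf μ b + emgf μ (-b)) := by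
  calc ENNReal.ofReal |∫ y, f y ∂μ|
      = ‖∫ y, f y ∂μ‖ₑ := (Real.enorm_eq_ofReal_abs _).symm
    _ ≤ ∫⁻ y, ‖f y‖ₑ ∂μ := enorm_integral_le_lintegral_enorm f
    _ ≤ ∫⁻ y, ENNReal.ofReal (a / 2) *
          (ENNReal.ofReal (exp (b * y)) + ENNReal.ofReal (exp (-b * y))) ∂μ := by
        refine lintegral_mono fun y => ?_
        rw [Real.enorm_eq_ofReal_abs, ← ENNReal.ofReal_add (exp_nonneg _) (exp_nonneg _),
          ← ENNReal.ofReal_mul (by positivity)]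
        refine ENNReal.ofReal_le_ofReal ((hbound y).trans_eq ?_)
        rw [cosh_eq, neg_mul]
        ring
    _ = _ := by
        rw [lintegral_const_mul _ (by fun_prop), lintegral_add_left (by fun_prop), emgf, emgf]

lemma abs_integral_le_of_emgf_le {f : ℝ → ℝ} {a b C : ℝ} (ha : 0 ≤ a) (hC : 0 ≤ C)
    (hbound : ∀ y, |f y| ≤ a * cosh (b * y)) {μ : Measure ℝ}
    (hpos : emgf μ b ≤ ENNReal.ofReal C) (hneg : emgf μ (-b) ≤ ENNReal.ofReal C) :
    |∫ y, f y ∂μ| ≤ a * C := by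
  refine (ENNReal.ofReal_le_ofReal_iff (by positivity)).1 ?_
  calc ENNReal.ofReal |∫ y, f y ∂μ| ≤ ENNReal.ofReal (a / 2) * (emgf μ b + emgf μ (-b)) :=
        ofReal_abs_integral_le_emgf ha hbound μ
    _ ≤ ENNReal.ofReal (a / 2) * (ENNReal.ofReal C + ENNReal.ofReal C) := by gcongr
    _ = ENNReal.ofReal (a * C) := by
        rw [← ENNReal.ofReal_add hC hC, ← ENNReal.ofReal_mul (by positivity)]
        congr 1
        ring

lemma hasSum_pow_div_factorial_succ {t : ℝ} (ht : t ≠ 0) :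
    HasSum (fun n : ℕ => t ^ n / (n + 1).factorial) ((exp t - 1) / t) := by
  have h : HasSum (fun n : ℕ => t ^ n / n.factorial) (exp t) := by
    rw [exp_eq_exp_ℝ]
    exact NormedSpace.expSeries_div_hasSum_exp t
  have h1 : HasSum (fun n : ℕ => t ^ (n + 1) / (n + 1).factorial) (exp t - 1) := by
    simpa using (hasSum_nat_add_iff' 1).mpr h
  have h2 : (fun n : ℕ => t ^ n / (n + 1).factorial)
      = fun n : ℕ => t ^ (n + 1) / (n + 1).factorial / t := by
    funext n
    rw [pow_succ]
    field_simp
  rw [h2]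
  exact h1.div_const t

lemma tsum_ofReal_poisson_le {u : ℕ → ℝ} {l M C : ℝ} (hl : 0 < l) (hM : 0 < M)
    (hC : 0 ≤ C) (hu : ∀ n, u n ≤ C * M ^ n) :
    ∑' n : ℕ, ENNReal.ofReal (exp (-l) * l ^ n / (n + 1).factorial * u n)
      ≤ ENNReal.ofReal (C * exp (-l) * (exp (l * M) - 1) / (l * M)) := by
  have hS := (hasSum_pow_div_factorial_succ (mul_pos hl hM).ne').mul_left (C * exp (-l))
  calc ∑' n : ℕ, ENNReal.ofReal (exp (-l) * l ^ n / (n + 1).factorial * u n)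
      ≤ ∑' n : ℕ, ENNReal.ofReal (C * exp (-l) * ((l * M) ^ n / (n + 1).factorial)) := by
        refine ENNReal.tsum_le_tsum fun n => ENNReal.ofReal_le_ofReal ?_
        calc exp (-l) * l ^ n / (n + 1).factorial * u n
            ≤ exp (-l) * l ^ n / (n + 1).factorial * (C * M ^ n) := by gcongr; exact hu n
          _ = C * exp (-l) * ((l * M) ^ n / (n + 1).factorial) := by ring
    _ = ENNReal.ofReal (C * exp (-l) * (exp (l * M) - 1) / (l * M)) := by
        rw [← ENNReal.ofReal_tsum_of_nonneg (fun n => by positivity) hS.summable, hS.tsum_eq,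
          mul_div_assoc]

instance sFinite_convPow (ρ : Measure ℝ) [SFinite ρ] (n : ℕ) : SFinite (convPow ρ n) := by
  induction n with
  | zero => rw [convPow]; infer_instance
  | succ n ih => rw [convPow]; infer_instance

lemma emgf_dirac_conv_convPow_le (ρ : Measure ℝ) [SFinite ρ] {t M : ℝ} (hM0 : 0 ≤ M)
    (hM : emgf ρ t ≤ ENNReal.ofReal M) (x : ℝ) (n : ℕ) :
    emgf (Measure.dirac x ∗ convPow ρ n) t ≤ ENNReal.ofReal (exp |t * x| * M ^ n) := by
  rw [emgf_conv, emgf_dirac, emgf_convPow, ENNReal.ofReal_mul (exp_nonneg _),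
    ENNReal.ofReal_pow hM0]
  gcongr
  exact le_abs_self _

lemma emgf_convPow_le (ρ : Measure ℝ) [SFinite ρ] {t M : ℝ} (hM0 : 0 ≤ M)
    (hM : emgf ρ t ≤ ENNReal.ofReal M) (n : ℕ) :
    emgf (convPow ρ n) t ≤ ENNReal.ofReal (M ^ n) := by
  rw [emgf_convPow, ENNReal.ofReal_pow hM0]
  gcongr

theorem fitness_series_explicit_bounds
    (f : ℝ → ℝ) (a b : ℝ) (ha : 0 < a)
    (hbound : ∀ x, |f x| ≤ a * Real.cosh (b * x))
    (ρ : Measure ℝ) (hρ : IsProbabilityMeasure ρ)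
    (K : Set ℝ) (hK : IsCompact K) (hsupp : ρ Kᶜ = 0)
    (l : ℝ) (hl : 0 < l) (x : ℝ) :
    (∑' n : ℕ, ENNReal.ofReal (Real.exp (-l) * l ^ n / (n + 1).factorial *
        |∫ y, f y ∂((Measure.dirac x).conv (convPow ρ n))|))
      ≤ ENNReal.ofReal (a * Real.exp (|b * x| - l) *
          (Real.exp (l * max (mgf' ρ b) (mgf' ρ (-b))) - 1) /
          (l * max (mgf' ρ b) (mgf' ρ (-b)))) ∧
    (∑' n : ℕ, ENNReal.ofReal (Real.exp (-l) * l ^ n / (n + 1).factorial *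
        |∫ y, f y ∂(convPow ρ (n + 1))|))
      ≤ ENNReal.ofReal (a *
          (Real.exp (l * max (mgf' ρ b) (mgf' ρ (-b))) - 1) /
          (l * Real.exp l)) := by
  set M := max (mgf' ρ b) (mgf' ρ (-b))
  have hint := integrable_exp_mul_of_ae_mem_compact (ρ := ρ) hK hsupp
  have hM : 0 < M := (integral_exp_pos (hint b)).trans_le (le_max_left _ _)
  have hpos : emgf ρ b ≤ ENNReal.ofReal M :=
    (emgf_eq_ofReal_mgf' (hint b)).trans_le (ENNReal.ofReal_le_ofReal (le_max_left _ _))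
  have hneg : emgf ρ (-b) ≤ ENNReal.ofReal M :=
    (emgf_eq_ofReal_mgf' (hint (-b))).trans_le (ENNReal.ofReal_le_ofReal (le_max_right _ _))
  constructor
  · have hx : |-b * x| = |b * x| := by rw [neg_mul, abs_neg]
    calc _ ≤ ENNReal.ofReal (a * exp |b * x| * exp (-l) * (exp (l * M) - 1) / (l * M)) :=
          tsum_ofReal_poisson_le hl hM (by positivity) fun n => by
            rw [mul_assoc]
            exact abs_integral_le_of_emgf_le ha.le (by positivity) hbound
              (emgf_dirac_conv_convPow_le ρ hM.le hpos x n)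
              (hx ▸ emgf_dirac_conv_convPow_le ρ hM.le hneg x n)
      _ = _ := by
        congr 1
        rw [exp_sub, exp_neg]
        ring
  · calc _ ≤ ENNReal.ofReal (a * M * exp (-l) * (exp (l * M) - 1) / (l * M)) :=
          tsum_ofReal_poisson_le hl hM (by positivity) fun n => by
            rw [mul_assoc, ← pow_succ']
            exact abs_integral_le_of_emgf_le ha.le (by positivity) hbound
              (emgf_convPow_le ρ hM.le hpos _) (emgf_convPow_le ρ hM.le hneg _)
      _ = _ := by
        rw [exp_neg]
        field_simp
end

section
/- Let f : ℝ → ℝ be continuous with |f(x)| ≤ a·cosh(b·x) for all x (a > 0, b ∈ ℝ), let λ > 0, and let ρ be a probability measure supported in [−d, d] with d > 0. Then for every ε > 0 there exists n₀ > 0 such that for all x in the support of ρ, Σ_{n=n₀}^∞ (e^{−λ} λ^n / (n+1)!) · ∫ (|f(y)| + ε + a·cosh(2·b·n₀·d)) d(δ_x ∗ ρ^{∗n})(y) < ε, and also Σ_{n=n₀}^∞ (e^{−λ} λ^n / (n+1)!) · ∫ (|f(y)| + ε + a·cosh(2·b·n₀·d)) d(ρ^{∗(n+1)})(y) < ε.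 -/
open MeasureTheory Filter

/-- The topological support of a measure on `ℝ`: the set of points all of whose
neighbourhoods have nonzero measure. -/
def msupp (μ : Measure ℝ) : Set ℝ := {x | ∀ U ∈ nhds x, μ U ≠ 0}

private lemma cosh_le_exp_abs (t : ℝ) : Real.cosh t ≤ Real.exp |t| := by
  rw [Real.cosh_eq]
  have h1 : Real.exp t ≤ Real.exp |t| := Real.exp_le_exp.2 (le_abs_self t)
  have h2 : Real.exp (-t) ≤ Real.exp |t| := Real.exp_le_exp.2 (neg_le_abs t)
  linarith

lemma convPow_prob (ρ : Measure ℝ) [IsProbabilityMeasure ρ] (n : ℕ) :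
    IsProbabilityMeasure (convPow ρ n) := by
  induction n with
  | zero => rw [convPow]; infer_instance
  | succ n ih => rw [convPow]; haveI := ih; infer_instance

lemma conv_null {μ ν : Measure ℝ} [SFinite μ] [SFinite ν]
    {A B S : Set ℝ} (hS : MeasurableSet S)
    (hμ : μ Aᶜ = 0) (hν : ν Bᶜ = 0)
    (hadd : ∀ x ∈ A, ∀ y ∈ B, x + y ∈ S) :
    (μ.conv ν) Sᶜ = 0 := by
  rw [Measure.conv, Measure.map_apply (by fun_prop) hS.compl]
  refine measure_mono_null (t := (Aᶜ ×ˢ (Set.univ : Set ℝ)) ∪ ((Set.univ : Set ℝ) ×ˢ Bᶜ)) ?_ ?_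
  · intro p hp
    by_cases hA : p.1 ∈ A
    · by_cases hB : p.2 ∈ B
      · exact absurd (hadd _ hA _ hB) hp
      · exact Or.inr ⟨Set.mem_univ _, hB⟩
    · exact Or.inl ⟨hA, Set.mem_univ _⟩
  · refine measure_union_null ?_ ?_
    · rw [Measure.prod_prod, hμ, zero_mul]
    · rw [Measure.prod_prod, hν, mul_zero]

lemma convPow_null (ρ : Measure ℝ) [IsProbabilityMeasure ρ] {d : ℝ}
    (hsupp : ρ (Set.Icc (-d) d)ᶜ = 0) :
    ∀ n : ℕ, convPow ρ n (Set.Icc (-((n : ℝ) * d)) ((n : ℝ) * d))ᶜ = 0 := by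
  intro n
  induction n with
  | zero =>
    rw [convPow, Measure.dirac_apply' _ measurableSet_Icc.compl]
    simp
  | succ n ih =>
    haveI := convPow_prob ρ n
    rw [convPow]
    refine conv_null measurableSet_Icc ih hsupp ?_
    rintro x hx y hy
    simp only [Set.mem_Icc] at *
    push_cast
    constructor <;> nlinarith [hx.1, hx.2, hy.1, hy.2]

lemma integral_bound {f : ℝ → ℝ} (hf : Continuous f) {a b : ℝ} (ha : 0 ≤ a)
    (hbound : ∀ x, |f x| ≤ a * Real.cosh (b * x))
    {c R : ℝ} (hc : 0 ≤ c)
    (μ : Measure ℝ) [IsProbabilityMeasure μ]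
    (hμ : μ (Set.Icc (-R) R)ᶜ = 0) :
    ∫ y, (|f y| + c) ∂μ ≤ a * Real.exp (|b| * R) + c := by
  have hae : ∀ᵐ y ∂μ, y ∈ Set.Icc (-R) R := by
    rw [MeasureTheory.ae_iff]
    exact hμ
  have hfb : ∀ᵐ y ∂μ, |f y| + c ≤ a * Real.exp (|b| * R) + c := by
    filter_upwards [hae] with y hy
    rw [Set.mem_Icc] at hy
    have h1 : |f y| ≤ a * Real.exp (|b| * R) := by
      calc |f y| ≤ a * Real.cosh (b * y) := hbound y
        _ ≤ a * Real.exp |b * y| := mul_le_mul_of_nonneg_left (cosh_le_exp_abs _) ha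
        _ ≤ a * Real.exp (|b| * R) := by
            refine mul_le_mul_of_nonneg_left (Real.exp_le_exp.2 ?_) ha
            rw [abs_mul]
            exact mul_le_mul_of_nonneg_left (abs_le.2 ⟨hy.1, hy.2⟩) (abs_nonneg b)
    linarith
  have hint : Integrable (fun y => |f y| + c) μ := by
    refine ⟨(hf.abs.add continuous_const).aestronglyMeasurable, ?_⟩
    apply MeasureTheory.HasFiniteIntegral.of_bounded (C := a * Real.exp (|b| * R) + c)
    filter_upwards [hfb] with y hy
    rw [Real.norm_eq_abs, abs_of_nonneg (add_nonneg (abs_nonneg _) hc)]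
    exact hy
  calc ∫ y, (|f y| + c) ∂μ ≤ ∫ _, (a * Real.exp (|b| * R) + c) ∂μ :=
        integral_mono_ae hint (integrable_const _) hfb
    _ = a * Real.exp (|b| * R) + c := by simp

theorem tail_of_fitness_series_small
    (f : ℝ → ℝ) (hf : Continuous f)
    (a b : ℝ) (ha : 0 < a)
    (hbound : ∀ x, |f x| ≤ a * Real.cosh (b * x))
    (l : ℝ) (hl : 0 < l)
    (d : ℝ) (hd : 0 < d)
    (ρ : Measure ℝ) (hρ : IsProbabilityMeasure ρ)
    (hsupp : ρ (Set.Icc (-d) d)ᶜ = 0) :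
    ∀ ε : ℝ, 0 < ε → ∃ n₀ : ℕ, 0 < n₀ ∧
      (∀ x ∈ msupp ρ,
        (∑' n : ℕ, Real.exp (-l) * l ^ (n + n₀) / (n + n₀ + 1).factorial *
          ∫ y, (|f y| + ε + a * Real.cosh (2 * b * n₀ * d))
            ∂((Measure.dirac x).conv (convPow ρ (n + n₀)))) < ε) ∧
      (∑' n : ℕ, Real.exp (-l) * l ^ (n + n₀) / (n + n₀ + 1).factorial *
        ∫ y, (|f y| + ε + a * Real.cosh (2 * b * n₀ * d))
          ∂(convPow ρ (n + n₀ + 1))) < ε := by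
  intro ε hε
  set E := Real.exp (2 * |b| * d) with hE
  have hE1 : 1 ≤ E := Real.one_le_exp (by positivity)
  set s : ℕ → ℝ := fun k => (Real.exp (-l) * (2 * a + ε) / l) * ((l * E) ^ k / k.factorial)
    with hs
  have hs_summable : Summable s := (Real.summable_pow_div_factorial (l * E)).mul_left _
  have hev : ∀ᶠ i in atTop, ∑' k, s (k + i) < ε :=
    (tendsto_sum_nat_add s).eventually_lt_const hε
  obtain ⟨N, hN⟩ := eventually_atTop.1 hev
  -- abbreviations
  have hshift : Summable (fun m => s (m + (N + 2))) := (summable_nat_add_iff (N + 2)).2 hs_summable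
  -- key per-term bound
  have key : ∀ n : ℕ, N + 1 ≤ n → ∀ (μ : Measure ℝ), IsProbabilityMeasure μ →
      μ (Set.Icc (-(((n : ℝ) + 1) * d)) (((n : ℝ) + 1) * d))ᶜ = 0 →
      Real.exp (-l) * l ^ n / (n + 1).factorial *
        ∫ y, (|f y| + ε + a * Real.cosh (2 * b * ((N + 1 : ℕ) : ℝ) * d)) ∂μ ≤ s (n + 1) := by
    intro n hn μ hμprob hμnull
    haveI := hμprob
    set K := a * Real.cosh (2 * b * ((N + 1 : ℕ) : ℝ) * d) with hK
    have hKnn : 0 ≤ K := mul_nonneg ha.le (Real.cosh_pos _).le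
    have hIle : (∫ y, (|f y| + ε + K) ∂μ) ≤
        a * Real.exp (|b| * (((n : ℝ) + 1) * d)) + (ε + K) := by
      have := integral_bound hf ha.le hbound (add_nonneg hε.le hKnn) μ hμnull
      simpa [add_assoc] using this
    have hZ : E ^ (n + 1) = Real.exp (((n + 1 : ℕ) : ℝ) * (2 * |b| * d)) :=
      (Real.exp_nat_mul (2 * |b| * d) (n + 1)).symm
    have h1 : a * Real.exp (|b| * (((n : ℝ) + 1) * d)) ≤ a * E ^ (n + 1) := by
      rw [hZ]
      refine mul_le_mul_of_nonneg_left (Real.exp_le_exp.2 ?_) ha.le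
      push_cast
      nlinarith [abs_nonneg b, hd.le, mul_nonneg (abs_nonneg b) hd.le,
        mul_nonneg (mul_nonneg (abs_nonneg b) hd.le) (Nat.cast_nonneg (α := ℝ) n)]
    have h2 : K ≤ a * E ^ (n + 1) := by
      rw [hZ, hK]
      refine mul_le_mul_of_nonneg_left ((cosh_le_exp_abs _).trans (Real.exp_le_exp.2 ?_)) ha.le
      have habs : |2 * b * ((N + 1 : ℕ) : ℝ) * d| = 2 * |b| * ((N + 1 : ℕ) : ℝ) * d := by
        rw [abs_mul, abs_mul, abs_mul, abs_two, Nat.abs_cast, abs_of_pos hd]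
      rw [habs]
      have hcast : ((N + 1 : ℕ) : ℝ) ≤ ((n + 1 : ℕ) : ℝ) := Nat.cast_le.2 (by omega)
      nlinarith [abs_nonneg b, hd.le, mul_nonneg (abs_nonneg b) hd.le,
        Nat.cast_nonneg (α := ℝ) (N + 1)]
    have h3 : ε ≤ ε * E ^ (n + 1) :=
      le_mul_of_one_le_right hε.le (one_le_pow₀ hE1)
    have hI2 : a * Real.exp (|b| * (((n : ℝ) + 1) * d)) + (ε + K) ≤ (2 * a + ε) * E ^ (n + 1) := by
      nlinarith [h1, h2, h3]
    have coefnn : 0 ≤ Real.exp (-l) * l ^ n / ((n + 1).factorial : ℝ) := by positivity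
    calc Real.exp (-l) * l ^ n / (n + 1).factorial * ∫ y, (|f y| + ε + K) ∂μ
        ≤ Real.exp (-l) * l ^ n / (n + 1).factorial * ((2 * a + ε) * E ^ (n + 1)) :=
          mul_le_mul_of_nonneg_left (hIle.trans hI2) coefnn
      _ = s (n + 1) := by
          simp only [hs]
          have hfact : (((n + 1).factorial : ℕ) : ℝ) ≠ 0 :=
            Nat.cast_ne_zero.2 (Nat.factorial_ne_zero _)
          rw [mul_pow, pow_succ]
          field_simp
          ring
  -- support facts
  have hms : ∀ x ∈ msupp ρ, x ∈ Set.Icc (-d) d := by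
    intro x hx
    by_contra hc
    exact hx _ (isClosed_Icc.isOpen_compl.mem_nhds hc) hsupp
  have term_nonneg : ∀ (n : ℕ) (μ : Measure ℝ),
      0 ≤ Real.exp (-l) * l ^ n / (n + 1).factorial *
        ∫ y, (|f y| + ε + a * Real.cosh (2 * b * ((N + 1 : ℕ) : ℝ) * d)) ∂μ := by
    intro n μ
    refine mul_nonneg (by positivity) (integral_nonneg fun y => ?_)
    exact add_nonneg (add_nonneg (abs_nonneg _) hε.le)
      (mul_nonneg ha.le (Real.cosh_pos _).le)
  refine ⟨N + 1, Nat.succ_pos N, ?_, ?_⟩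
  · intro x hx
    have hxIcc := hms x hx
    have hterm : ∀ m : ℕ, Real.exp (-l) * l ^ (m + (N + 1)) / (m + (N + 1) + 1).factorial *
        (∫ y, (|f y| + ε + a * Real.cosh (2 * b * ((N + 1 : ℕ) : ℝ) * d))
          ∂((Measure.dirac x).conv (convPow ρ (m + (N + 1))))) ≤ s (m + (N + 2)) := by
      intro m
      haveI := convPow_prob ρ (m + (N + 1))
      refine key (m + (N + 1)) (by omega) _ inferInstance ?_
      refine conv_null (A := Set.Icc (-d) d) measurableSet_Icc ?_ (convPow_null ρ hsupp (m + (N + 1))) ?_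
      · rw [Measure.dirac_apply' _ measurableSet_Icc.compl]
        simp [Set.indicator_apply, hxIcc]
      · rintro u hu v hv
        rw [Set.mem_Icc] at *
        constructor <;> nlinarith [hu.1, hu.2, hv.1, hv.2]
    calc (∑' m : ℕ, Real.exp (-l) * l ^ (m + (N + 1)) / (m + (N + 1) + 1).factorial *
          ∫ y, (|f y| + ε + a * Real.cosh (2 * b * ((N + 1 : ℕ) : ℝ) * d))
            ∂((Measure.dirac x).conv (convPow ρ (m + (N + 1)))))
        ≤ ∑' m : ℕ, s (m + (N + 2)) :=
          Summable.tsum_le_tsum hterm (Summable.of_nonneg_of_le (fun m => term_nonneg _ _) hterm hshift)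
            hshift
      _ < ε := hN (N + 2) (by omega)
  · have hterm : ∀ m : ℕ, Real.exp (-l) * l ^ (m + (N + 1)) / (m + (N + 1) + 1).factorial *
        (∫ y, (|f y| + ε + a * Real.cosh (2 * b * ((N + 1 : ℕ) : ℝ) * d))
          ∂(convPow ρ (m + (N + 1) + 1))) ≤ s (m + (N + 2)) := by
      intro m
      haveI := convPow_prob ρ (m + (N + 1) + 1)
      refine key (m + (N + 1)) (by omega) _ inferInstance ?_
      have := convPow_null ρ hsupp (m + (N + 1) + 1)
      push_cast at this ⊢
      convert this using 3
    calc (∑' m : ℕ, Real.exp (-l) * l ^ (m + (N + 1)) / (m + (N + 1) + 1).factorial *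
          ∫ y, (|f y| + ε + a * Real.cosh (2 * b * ((N + 1 : ℕ) : ℝ) * d))
            ∂(convPow ρ (m + (N + 1) + 1)))
        ≤ ∑' m : ℕ, s (m + (N + 2)) :=
          Summable.tsum_le_tsum hterm (Summable.of_nonneg_of_le (fun m => term_nonneg _ _) hterm hshift)
            hshift
      _ < ε := hN (N + 2) (by omega)
end

section
/- Let λ ≥ 0 and let ρ be a compactly supported probability measure on [0, ∞) with mean x̄ = ∫ x dρ > 0. Then the mean of the updated measure A(ρ) satisfies ∫ x dA(ρ) = x̄ + g(λ)·(∫ x² dρ − x̄²)/x̄; in particular ∫ x dA(ρ) ≥ x̄, i.e. the mean molecular fitness never decreases under one round of compartmentalized selection. -/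
/-! The mean of `A(ρ)` is `∫ (1 - g + g x / x̄) x dρ = (1 - g) x̄ + g (∫ x² dρ) / x̄`, which exceeds
`x̄` by `g` times the variance of `ρ` divided by `x̄`. The only subtlety is that `A(ρ)` is defined
through `ENNReal.ofReal` of the density, so one needs `0 ≤ g ≤ 1` and `x ≥ 0` on the support
to see that the density is nonnegative and no truncation happens. -/

open MeasureTheory Filter

lemma gFactor_nonneg {l : ℝ} (hl : 0 ≤ l) : 0 ≤ gFactor l := by
  unfold gFactor
  split_ifs with h
  · exact zero_le_one
  · have : Real.exp (-l) ≤ 1 := Real.exp_le_one_iff.mpr (neg_nonpos.mpr hl)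
    exact div_nonneg (sub_nonneg.mpr this) hl

lemma gFactor_le_one {l : ℝ} (hl : 0 ≤ l) : gFactor l ≤ 1 := by
  unfold gFactor
  split_ifs with h
  · exact le_rfl
  · have := Real.add_one_le_exp (-l)
    exact (div_le_one (lt_of_le_of_ne hl (Ne.symm h))).mpr (by linarith)

lemma integral_withDensity_ofReal {α : Type*} [MeasurableSpace α] {μ : Measure α} {f : α → ℝ}
    (hf : Measurable f) (hf_nonneg : ∀ᵐ x ∂μ, 0 ≤ f x) (g : α → ℝ) :
    ∫ x, g x ∂μ.withDensity (fun x => ENNReal.ofReal (f x)) = ∫ x, f x * g x ∂μ := by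
  rw [integral_withDensity_eq_integral_toReal_smul (by fun_prop)
    (ae_of_all _ fun _ => ENNReal.ofReal_lt_top)]
  refine integral_congr_ae ?_
  filter_upwards [hf_nonneg] with x hx
  rw [ENNReal.toReal_ofReal hx, smul_eq_mul]

lemma Continuous.memLp_of_ae_mem_isCompact {α E : Type*} [MeasurableSpace α] [TopologicalSpace α]
    [OpensMeasurableSpace α] [NormedAddCommGroup E] [SecondCountableTopologyEither α E]
    {μ : Measure α} [IsFiniteMeasure μ] {f : α → E} (hf : Continuous f) {K : Set α}
    (hK : IsCompact K) (hμK : ∀ᵐ x ∂μ, x ∈ K) (p : ENNReal) : MemLp f p μ := by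
  obtain ⟨C, hC⟩ := hK.exists_bound_of_continuousOn hf.continuousOn
  exact MemLp.of_bound hf.aestronglyMeasurable C (hμK.mono hC)

lemma sq_integral_le_integral_sq {Ω : Type*} [MeasurableSpace Ω] {μ : Measure Ω}
    [IsProbabilityMeasure μ] {f : Ω → ℝ} (hf : MemLp f 2 μ) :
    (∫ x, f x ∂μ) ^ 2 ≤ ∫ x, f x ^ 2 ∂μ := by
  have := ProbabilityTheory.variance_nonneg f μ
  rw [ProbabilityTheory.variance_eq_sub hf] at this
  simpa using this

lemma integral_updateA_s14 {l : ℝ} (hl : 0 ≤ l) {ρ : Measure ℝ} (hρ : ∀ᵐ x ∂ρ, 0 ≤ x) (f : ℝ → ℝ) :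
    ∫ x, f x ∂updateA l ρ =
      ∫ x, (1 - gFactor l + gFactor l * x / ∫ y, y ∂ρ) * f x ∂ρ := by
  refine integral_withDensity_ofReal (by fun_prop) ?_ f
  filter_upwards [hρ] with x hx
  have : 0 ≤ gFactor l * x / ∫ y, y ∂ρ :=
    div_nonneg (mul_nonneg (gFactor_nonneg hl) hx) (integral_nonneg_of_ae hρ)
  linarith [gFactor_le_one hl]

lemma integral_id_updateA {l : ℝ} (hl : 0 ≤ l) {ρ : Measure ℝ} (hρ : ∀ᵐ x ∂ρ, 0 ≤ x)
    (h₁ : Integrable (fun x => x) ρ) (h₂ : Integrable (fun x => x ^ 2) ρ)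
    (hmean : ∫ x, x ∂ρ ≠ 0) :
    ∫ x, x ∂updateA l ρ = (∫ x, x ∂ρ) +
      gFactor l * ((∫ x, x ^ 2 ∂ρ) - (∫ x, x ∂ρ) ^ 2) / ∫ x, x ∂ρ := by
  set g := gFactor l
  set m := ∫ x, x ∂ρ
  have hsplit : ∀ x : ℝ, (1 - g + g * x / m) * x = (1 - g) * x + g / m * x ^ 2 := fun x => by ring
  rw [integral_updateA_s14 hl hρ, funext hsplit, integral_add (h₁.const_mul _) (h₂.const_mul _),
    integral_const_mul, integral_const_mul]
  field_simp
  ring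

theorem mean_fitness_never_decreases
    (l : ℝ) (hl : 0 ≤ l)
    (ρ : Measure ℝ) (hρ : IsProbabilityMeasure ρ)
    (K : Set ℝ) (hK : IsCompact K) (hsupp : ρ Kᶜ = 0)
    (hpos : ρ (Set.Iio 0) = 0)
    (hmean : 0 < ∫ x, x ∂ρ) :
    (∫ x, x ∂(updateA l ρ)) = (∫ x, x ∂ρ) +
      gFactor l * ((∫ x, x ^ 2 ∂ρ) - (∫ x, x ∂ρ) ^ 2) / (∫ x, x ∂ρ) ∧
    (∫ x, x ∂ρ) ≤ ∫ x, x ∂(updateA l ρ) := by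
  have h_nonneg : Set.Ici (0 : ℝ) ∈ ae ρ := mem_ae_iff.mpr (by rwa [Set.compl_Ici])
  have hL2 : MemLp (fun x : ℝ => x) 2 ρ :=
    continuous_id.memLp_of_ae_mem_isCompact hK (mem_ae_iff.mpr hsupp) 2
  have hformula := integral_id_updateA hl h_nonneg (hL2.integrable one_le_two) hL2.integrable_sq
    hmean.ne'
  refine ⟨hformula, ?_⟩
  have hvar := sq_integral_le_integral_sq hL2
  rw [hformula, le_add_iff_nonneg_right]
  exact div_nonneg (mul_nonneg (gFactor_nonneg hl) (sub_nonneg.mpr hvar)) hmean.le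
end
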